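/- arXiv:1111.2971 — 3 statements merged into one kernel-verified Lean document; each statement's English description precedes it below -/
import Mathlib

section
/- Let f : [a,b] → ℝ be a Lipschitz function with f(a) ≤ 0, and suppose that for every t ∈ [a,b) with f(t) ≥ 0 the upper right Dini derivative satisfies D⁺f(t) ≤ 0. Then f(b) ≤ 0. -/
/-- The upper right Dini derivative: `limsup_{h → 0⁺} (f (t+h) - f t) / h`. -/
noncomputable def upperDini (f : ℝ → ℝ) (t : ℝ) : ℝ :=
  Filter.limsup (fun h => (f (t + h) - f t) / h) (nhdsWithin 0 (Set.Ioi 0))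

private lemma key (a b : ℝ) (hab : a ≤ b) (f : ℝ → ℝ) (K : NNReal)
    (hf : LipschitzOnWith K f (Set.Icc a b)) (ha : f a ≤ 0)
    (hD : ∀ t ∈ Set.Ico a b, 0 ≤ f t → upperDini f t ≤ 0)
    (ε : ℝ) (hε : 0 < ε) : f b ≤ ε * (b - a) := by
  set g : ℝ → ℝ := fun t => f t - ε * (t - a) with hg
  have hgc : ContinuousOn g (Set.Icc a b) :=
    hf.continuousOn.sub (by fun_prop)
  set S : Set ℝ := Set.Icc a b ∩ g ⁻¹' Set.Iic 0 with hS
  have haS : a ∈ S := by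
    refine ⟨⟨le_refl a, hab⟩, ?_⟩
    simp [hg, ha]
  have hSb : ∀ t ∈ S, t ≤ b := fun t ht => ht.1.2
  have hbdd : BddAbove S := ⟨b, hSb⟩
  have hclosed : IsClosed S :=
    hgc.preimage_isClosed_of_isClosed isClosed_Icc isClosed_Iic
  set c := sSup S with hc
  have hcS : c ∈ S := hclosed.csSup_mem ⟨a, haS⟩ hbdd
  have hcab : c ∈ Set.Icc a b := hcS.1
  have hfc : f c ≤ ε * (c - a) := by
    have := hcS.2
    simpa [hg, sub_nonpos] using this
  have hcb : c = b := by
    by_contra hne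
    have hcb' : c < b := lt_of_le_of_ne hcab.2 hne
    -- find t ∈ S with t > c, contradiction
    have hmain : ∃ t, c < t ∧ t ∈ S := by
      rcases lt_or_eq_of_le hfc with hlt | heq
      · -- f c < ε (c - a): use continuity
        have hgneg : g c < 0 := by simp [hg, sub_neg]; exact hlt
        have hev : ∀ᶠ t in nhdsWithin c (Set.Icc a b), g t < 0 :=
          (hgc c hcab).eventually_lt_const hgneg
        have hsub : Set.Ioo c b ⊆ Set.Icc a b := fun x hx =>
          ⟨le_trans hcab.1 hx.1.le, hx.2.le⟩
        have hev2 : ∀ᶠ t in nhdsWithin c (Set.Ioo c b), g t < 0 :=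
          hev.filter_mono (nhdsWithin_mono c hsub)
        have : (nhdsWithin c (Set.Ioo c b)).NeBot := left_nhdsWithin_Ioo_neBot hcb'
        obtain ⟨t, ht⟩ := (hev2.and (eventually_mem_nhdsWithin)).exists
        exact ⟨t, ht.2.1, ⟨hsub ht.2, le_of_lt ht.1⟩⟩
      · -- f c = ε (c - a) ≥ 0 : use Dini condition
        have hfc0 : 0 ≤ f c := by
          rw [heq]; exact mul_nonneg hε.le (by linarith [hcab.1])
        have hDini : upperDini f c ≤ 0 := hD c ⟨hcab.1, hcb'⟩ hfc0
        have hbound : ∀ᶠ h in nhdsWithin 0 (Set.Ioi 0),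
            (f (c + h) - f c) / h ≤ K := by
          have hmem : ∀ᶠ h in nhdsWithin 0 (Set.Ioi 0), h < b - c := by
            apply eventually_nhdsWithin_of_eventually_nhds
            exact Filter.Tendsto.eventually_lt_const (by linarith) Filter.tendsto_id
          filter_upwards [hmem, self_mem_nhdsWithin] with h h1 h2
          have h0 : 0 < h := h2
          have hch : c + h ∈ Set.Icc a b :=
            ⟨by linarith [hcab.1], by linarith⟩
          have := hf.dist_le_mul _ hch _ hcab
          rw [Real.dist_eq, Real.dist_eq] at this
          have habs : f (c + h) - f c ≤ K * h := by
            have : |f (c + h) - f c| ≤ K * |c + h - c| := this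
            rw [show c + h - c = h by ring, abs_of_pos h0] at this
            exact le_trans (le_abs_self _) this
          rw [div_le_iff₀ h0]
          linarith
        have hbd : Filter.IsBoundedUnder (· ≤ ·) (nhdsWithin 0 (Set.Ioi 0))
            (fun h => (f (c + h) - f c) / h) := ⟨K, hbound⟩
        have hlt : upperDini f c < ε := lt_of_le_of_lt hDini hε
        have hev : ∀ᶠ h in nhdsWithin 0 (Set.Ioi 0),
            (f (c + h) - f c) / h < ε :=
          Filter.eventually_lt_of_limsup_lt hlt hbd
        have hmem : ∀ᶠ h in nhdsWithin 0 (Set.Ioi 0), h < b - c := by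
          apply eventually_nhdsWithin_of_eventually_nhds
          exact Filter.Tendsto.eventually_lt_const (by linarith) Filter.tendsto_id
        obtain ⟨h, hh1, hh2, hh3⟩ :=
          (hev.and (hmem.and self_mem_nhdsWithin)).exists
        have h0 : (0 : ℝ) < h := hh3
        refine ⟨c + h, by linarith, ⟨⟨by linarith [hcab.1], by linarith⟩, ?_⟩⟩
        have : f (c + h) - f c < ε * h := by
          have := (div_lt_iff₀ h0).mp hh1
          linarith
        simp only [Set.mem_preimage, Set.mem_Iic, hg]
        have hring : ε * (c + h - a) = ε * (c - a) + ε * h := by ring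
        linarith
    obtain ⟨t, htc, htS⟩ := hmain
    exact absurd (le_csSup hbdd htS) (not_le.mpr htc)
  rw [← hcb]; exact hfc

theorem stmt0 (a b : ℝ) (hab : a ≤ b) (f : ℝ → ℝ) (K : NNReal)
    (hf : LipschitzOnWith K f (Set.Icc a b)) (ha : f a ≤ 0)
    (hD : ∀ t ∈ Set.Ico a b, 0 ≤ f t → upperDini f t ≤ 0) :
    f b ≤ 0 := by
  rcases eq_or_lt_of_le hab with rfl | hab'
  · exact ha
  · refine le_of_forall_pos_le_add fun δ hδ => ?_
    have hba : b - a ≠ 0 := ne_of_gt (by linarith)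
    have := key a b hab f K hf ha hD (δ / (b - a)) (div_pos hδ (by linarith))
    rw [div_mul_cancel₀ _ hba] at this
    linarith
end

section
/- Let g : ℝ × ℝᵏ → ℝ be continuously differentiable and let Y ⊆ ℝᵏ be a nonempty compact set. Define h(t) := inf_{y ∈ Y} g(t,y) and, for each t, the set Y(t) := {y ∈ Y : g(t,y) = h(t)}. Then h is locally Lipschitz on ℝ, and for every t ∈ ℝ its lower right Dini derivative satisfies D₊h(t) ≥ inf_{y ∈ Y(t)} ∂g/∂t(t,y). -/
/-!
Each slice `t ↦ g (t, y)` is Lipschitz on a compact interval with a constant uniform in `y ∈ Y`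
(the partial derivative is bounded on `[a, b] × Y`), and an infimum of uniformly Lipschitz
functions is Lipschitz. For the Dini bound fix `c` below `∂g/∂t (t, y)` for every minimizer
`y ∈ Y(t)`. By compactness of `Y`, for `τ₁, τ₂` close to `t` every `y ∈ Y` satisfies
`c < ∂g/∂t (τ₁, y)` or fails to be a minimizer at `τ₂`. Taking a minimizer `y` at `t + s`,
`h (t + s) - h t ≥ g (t + s, y) - g (t, y) = s · ∂g/∂t (ξ, y) ≥ s c` by the mean value theorem.
-/

/-- The lower right Dini derivative: `liminf_{h → 0⁺} (f (t+h) - f t) / h`. -/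
noncomputable def lowerDini (f : ℝ → ℝ) (t : ℝ) : ℝ :=
  Filter.liminf (fun h => (f (t + h) - f t) / h) (nhdsWithin 0 (Set.Ioi 0))

open Set Filter Topology
open scoped NNReal

theorem lipschitzOnWith_sInf_image {α ι : Type*} [PseudoMetricSpace α] {f : α → ι → ℝ}
    {s : Set α} {Y : Set ι} {K : ℝ≥0} (hY : Y.Nonempty) (hbdd : ∀ x ∈ s, BddBelow (f x '' Y))
    (hf : ∀ y ∈ Y, LipschitzOnWith K (f · y) s) :
    LipschitzOnWith K (fun x => sInf (f x '' Y)) s := by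
  refine LipschitzOnWith.of_le_add_mul K fun x hx x' hx' => ?_
  rw [← sub_le_iff_le_add]
  refine le_csInf (hY.image _) ?_
  rintro _ ⟨y, hy, rfl⟩
  have hxy : f x y ≤ f x' y + K * dist x x' := (hf y hy).le_add_mul hx hx'
  linarith [csInf_le (hbdd x hx) (mem_image_of_mem (f x) hy)]

theorem LocallyLipschitz.le_lowerDini {f : ℝ → ℝ} (hf : LocallyLipschitz f) {t a : ℝ}
    (ha : ∀ c < a, ∀ᶠ s in 𝓝[>] 0, c ≤ (f (t + s) - f t) / s) : a ≤ lowerDini f t := by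
  obtain ⟨K, U, hU, hfU⟩ := hf t
  have hslope_le : ∀ᶠ s in 𝓝[>] (0 : ℝ), (f (t + s) - f t) / s ≤ K := by
    have hshift : Tendsto (fun s : ℝ => t + s) (𝓝[>] 0) (𝓝 t) :=
      tendsto_nhdsWithin_of_tendsto_nhds (by simpa using (continuous_const_add t).tendsto 0)
    filter_upwards [hshift hU, self_mem_nhdsWithin] with s hsU (hs : 0 < s)
    rw [div_le_iff₀ hs]
    have := hfU.dist_le_mul (t + s) hsU t (mem_of_mem_nhds hU)
    rw [Real.dist_eq, Real.dist_eq, add_sub_cancel_left, abs_of_pos hs] at this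
    linarith [le_abs_self (f (t + s) - f t)]
  refine le_of_forall_lt_imp_le_of_dense fun c hc => ?_
  exact le_liminf_of_le (IsBoundedUnder.isCoboundedUnder_ge ⟨K, hslope_le⟩) (ha c hc)

theorem Differentiable.hasDerivAt_slice {E : Type*} [NormedAddCommGroup E] [NormedSpace ℝ E]
    {g : ℝ × E → ℝ} (hg : Differentiable ℝ g) (t : ℝ) (y : E) :
    HasDerivAt (fun s => g (s, y)) (fderiv ℝ g (t, y) (1, 0)) t :=
  (hg (t, y)).hasFDerivAt.comp_hasDerivAt t ((hasDerivAt_id t).prodMk (hasDerivAt_const t y))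

noncomputable def sliceInf {E : Type*} (g : ℝ × E → ℝ) (Y : Set E) (t : ℝ) : ℝ :=
  sInf ((fun y => g (t, y)) '' Y)

section sliceInf

variable {E : Type*} [TopologicalSpace E] {g φ : ℝ × E → ℝ} {Y : Set E}

theorem exists_eq_sliceInf (hg : Continuous g) (hY : IsCompact Y) (hYne : Y.Nonempty) (t : ℝ) :
    ∃ y ∈ Y, g (t, y) = sliceInf g Y t := by
  obtain ⟨y, hy, hmin⟩ := hY.exists_sInf_image_eq hYne (hg.comp (.prodMk_right t)).continuousOn
  exact ⟨y, hy, hmin.symm⟩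

theorem bddBelow_slice_image (hg : Continuous g) (hY : IsCompact Y) (t : ℝ) :
    BddBelow ((fun y => g (t, y)) '' Y) :=
  (hY.image (hg.comp (.prodMk_right t))).bddBelow

theorem sliceInf_le (hg : Continuous g) (hY : IsCompact Y) (t : ℝ) {y : E} (hy : y ∈ Y) :
    sliceInf g Y t ≤ g (t, y) :=
  csInf_le (bddBelow_slice_image hg hY t) (mem_image_of_mem _ hy)

theorem continuous_sliceInf (hg : Continuous g) (hY : IsCompact Y) :
    Continuous (sliceInf g Y) :=
  hY.continuous_sInf (f := fun t y => g (t, y)) hg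

variable (hg : Continuous g) (hφ : Continuous φ)
  (hderiv : ∀ t y, HasDerivAt (fun s => g (s, y)) (φ (t, y)) t)
include hg hφ hderiv

theorem locallyLipschitz_sliceInf (hY : IsCompact Y) (hYne : Y.Nonempty) :
    LocallyLipschitz (sliceInf g Y) := by
  intro t
  have hK : IsCompact (Icc (t - 1) (t + 1) ×ˢ Y) := isCompact_Icc.prod hY
  obtain ⟨C, hC⟩ := hK.exists_bound_of_continuousOn hφ.continuousOn
  have hslice : ∀ y ∈ Y, LipschitzOnWith C.toNNReal (fun s => g (s, y)) (Icc (t - 1) (t + 1)) :=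
    fun y hy => (convex_Icc _ _).lipschitzOnWith_of_nnnorm_hasDerivWithin_le
      (fun s _ => (hderiv s y).hasDerivWithinAt) fun s hs => by
        rw [← NNReal.coe_le_coe, coe_nnnorm, Real.coe_toNNReal']
        exact (hC (s, y) ⟨hs, hy⟩).trans (le_max_left _ _)
  exact ⟨C.toNNReal, Icc (t - 1) (t + 1), Icc_mem_nhds (by linarith) (by linarith),
    lipschitzOnWith_sInf_image hYne (fun s _ => bddBelow_slice_image hg hY s) hslice⟩

theorem eventually_le_slope_sliceInf (hY : IsCompact Y) (hYne : Y.Nonempty) {t c : ℝ}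
    (hc : ∀ y ∈ Y, g (t, y) = sliceInf g Y t → c < φ (t, y)) :
    ∀ᶠ s in 𝓝[>] 0, c ≤ (sliceInf g Y (t + s) - sliceInf g Y t) / s := by
  set h := sliceInf g Y
  have hh : Continuous h := continuous_sliceInf hg hY
  have hnear : ∀ᶠ p : ℝ × ℝ in 𝓝 (t, t), ∀ y ∈ Y, c < φ (p.1, y) ∨ h p.2 < g (p.2, y) := by
    refine hY.eventually_forall_of_forall_eventually fun y hy => ?_
    rcases (sliceInf_le hg hY t hy).eq_or_lt with hmin | hlt
    · have hφ' : Continuous fun z : (ℝ × ℝ) × E => φ (z.1.1, z.2) := hφ.comp (by fun_prop)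
      exact ((hφ'.tendsto _).eventually_const_lt (hc y hy hmin.symm)).mono fun _ => Or.inl
    · have hh' : Continuous fun z : (ℝ × ℝ) × E => h z.1.2 := hh.comp (by fun_prop)
      have hg' : Continuous fun z : (ℝ × ℝ) × E => g (z.1.2, z.2) := hg.comp (by fun_prop)
      exact (hh'.continuousAt.eventually_lt hg'.continuousAt hlt).mono fun _ => Or.inr
  obtain ⟨δ, hδ, hnear⟩ := Metric.eventually_nhds_iff.1 hnear
  filter_upwards [Ioo_mem_nhdsGT hδ] with s ⟨hs, hsδ⟩
  obtain ⟨y, hy, hymin⟩ := exists_eq_sliceInf hg hY hYne (t + s)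
  obtain ⟨ξ, hξ, hslope⟩ := exists_hasDerivAt_eq_slope (fun τ => g (τ, y)) (fun τ => φ (τ, y))
    (by linarith : t < t + s) (hg.comp (.prodMk_left y)).continuousOn fun τ _ => hderiv τ y
  have hdist : dist (ξ, t + s) (t, t) < δ := by
    rw [Prod.dist_eq, Real.dist_eq, Real.dist_eq, add_sub_cancel_left, abs_of_pos hs,
      abs_of_pos (by linarith [hξ.1])]
    exact max_lt (by linarith [hξ.2]) hsδ
  have hcξ : c < φ (ξ, y) := (hnear hdist y hy).resolve_right (by simp [h, hymin])
  rw [add_sub_cancel_left] at hslope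
  rw [le_div_iff₀ hs]
  calc c * s ≤ φ (ξ, y) * s := by gcongr
    _ = g (t + s, y) - g (t, y) := by rw [hslope]; field_simp
    _ ≤ h (t + s) - h t := by rw [hymin]; linarith [sliceInf_le hg hY t hy]

theorem sInf_image_minimizers_le_lowerDini_sliceInf (hY : IsCompact Y) (hYne : Y.Nonempty)
    (t : ℝ) :
    sInf ((fun y => φ (t, y)) '' {y ∈ Y | g (t, y) = sliceInf g Y t})
      ≤ lowerDini (sliceInf g Y) t := by
  refine (locallyLipschitz_sliceInf hg hφ hderiv hY hYne).le_lowerDini fun c hc => ?_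
  refine eventually_le_slope_sliceInf hg hφ hderiv hY hYne fun y hy hmin => hc.trans_le ?_
  exact csInf_le ((bddBelow_slice_image hφ hY t).mono (image_mono (sep_subset _ _)))
    (mem_image_of_mem _ ⟨hy, hmin⟩)

end sliceInf

theorem stmt4 (k : ℕ) (g : ℝ × EuclideanSpace ℝ (Fin k) → ℝ) (hg : ContDiff ℝ 1 g)
    (Y : Set (EuclideanSpace ℝ (Fin k))) (hY : IsCompact Y) (hYne : Y.Nonempty)
    (h : ℝ → ℝ) (hh : ∀ t, h t = sInf ((fun y => g (t, y)) '' Y)) :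
    LocallyLipschitz h ∧
      ∀ t : ℝ, sInf ((fun y => deriv (fun s => g (s, y)) t) '' {y ∈ Y | g (t, y) = h t})
        ≤ lowerDini h t := by
  obtain rfl : h = sliceInf g Y := funext hh
  have hφ : Continuous fun p => fderiv ℝ g p (1, 0) :=
    (hg.continuous_fderiv one_ne_zero).clm_apply continuous_const
  have hderiv := (hg.differentiable one_ne_zero).hasDerivAt_slice
  refine ⟨locallyLipschitz_sliceInf hg.continuous hφ hderiv hY hYne, fun t => ?_⟩
  simp only [fun y => (hderiv t y).deriv]
  exact sInf_image_minimizers_le_lowerDini_sliceInf hg.continuous hφ hderiv hY hYne t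
end

section
/- Let X ⊆ ℝᵏ be a closed convex set and let φ : ℝᵏ → ℝᵏ be a Lipschitz vector field. Then the following are equivalent: (i) every differentiable curve f : [0,T] → ℝᵏ (T > 0) solving the ODE f'(t) = φ(f(t)) with f(0) ∈ X satisfies f(t) ∈ X for all t ∈ [0,T]; (ii) for every z ∈ X and every linear functional l : ℝᵏ → ℝ such that l(x) ≤ l(z) for all x ∈ X, one has l(φ(z)) ≤ 0. (Condition (ii) says that at each boundary point z of X the vector φ(z) lies in the tangent cone of X at z, expressed via support functionals.) -/
/-!
(ii) ⇒ (i): along a solution `f`, let `g t = dist (f t, X)²` and let `p` be the point of `X`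
nearest to `f t`. Then `g ≤ ‖f · - p‖²` with equality at `t`, and the derivative
`2 ⟪f t - p, φ (f t)⟫` of the right-hand side is at most `2 K g t`, since `f t - p` is an outer
normal of `X` at `p` and `φ` is `K`-Lipschitz. So the right Dini derivative of `g` is at most
`2 K g`, and Gronwall's inequality with `g 0 = 0` forces `g ≡ 0`.

(i) ⇒ (ii): run the solution from `z` (Picard–Lindelöf); for a support functional `l` at `z`,
`l ∘ f` is maximal at `t = 0`, so its right derivative `l (φ z)` is nonpositive.
-/

open Set Metric Filter
open scoped Topology RealInnerProductSpace NNReal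

/-- Picard–Lindelöf for a globally Lipschitz autonomous field: on the unit ball around `x₀` the
field is bounded by `L = ‖φ x₀‖ + K`, so the solution exists for time `(L + 1)⁻¹`. -/
theorem LipschitzWith.exists_eq_forall_mem_Icc_hasDerivWithinAt {E : Type*}
    [NormedAddCommGroup E] [NormedSpace ℝ E] [CompleteSpace E] {φ : E → E} {K : ℝ≥0}
    (hφ : LipschitzWith K φ) (x₀ : E) :
    ∃ T > 0, ∃ f : ℝ → E, f 0 = x₀ ∧
      ∀ t ∈ Icc 0 T, HasDerivWithinAt f (φ (f t)) (Icc 0 T) t := by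
  set L : ℝ≥0 := ‖φ x₀‖₊ + K
  set T : ℝ := ((L : ℝ) + 1)⁻¹
  have hT : 0 < T := by positivity
  have hbound : ∀ x ∈ closedBall x₀ (1 : ℝ≥0), ‖φ x‖ ≤ L := fun x hx ↦
    calc ‖φ x‖ ≤ ‖φ x - φ x₀‖ + ‖φ x₀‖ := norm_le_norm_sub_add _ _
      _ ≤ K * ‖x - x₀‖ + ‖φ x₀‖ := by gcongr; exact hφ.norm_sub_le x x₀
      _ ≤ K * 1 + ‖φ x₀‖ := by gcongr; simpa [dist_eq_norm] using hx
      _ = L := by simp [L, add_comm]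
  have htime : (L : ℝ) * max (T - 0) (0 - 0) ≤ ((1 : ℝ≥0) : ℝ) - ((0 : ℝ≥0) : ℝ) := by
    rw [sub_zero, sub_self, max_eq_left hT.le, NNReal.coe_one, NNReal.coe_zero, sub_zero,
      ← div_eq_mul_inv, div_le_one (by positivity)]
    linarith
  have hPL : IsPicardLindelof (fun _ ↦ φ) (⟨0, le_rfl, hT.le⟩ : Icc 0 T) x₀ 1 0 L K :=
    .of_time_independent hbound hφ.lipschitzOnWith htime
  exact ⟨T, hT, hPL.exists_eq_forall_mem_Icc_hasDerivWithinAt₀⟩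

theorem HasDerivWithinAt.apply_nonpos_of_mapsTo {E : Type*} [NormedAddCommGroup E]
    [NormedSpace ℝ E] {X : Set E} {f : ℝ → E} {v : E} {T : ℝ} (hT : 0 < T)
    (hf : HasDerivWithinAt f v (Icc 0 T) 0) (hfX : MapsTo f (Icc 0 T) X) {l : E →L[ℝ] ℝ}
    (hl : ∀ x ∈ X, l x ≤ l (f 0)) : l v ≤ 0 := by
  have hmax : IsLocalMaxOn (l ∘ f) (Icc 0 T) 0 :=
    IsMaxOn.localize fun t ht ↦ hl _ (hfX ht)
  have hcone : T - 0 ∈ posTangentConeAt (Icc 0 T) (0 : ℝ) :=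
    sub_mem_posTangentConeAt_of_segment_subset (segment_eq_Icc hT.le).subset
  have := hmax.hasFDerivWithinAt_nonpos (l.hasFDerivAt.comp_hasFDerivWithinAt 0 hf) hcone
  simp only [ContinuousLinearMap.comp_apply, ContinuousLinearMap.toSpanSingleton_apply, sub_zero,
    map_smul, smul_eq_mul] at this
  exact nonpos_of_mul_nonpos_right this hT

theorem frequently_slope_lt_of_le_of_hasDerivWithinAt {g h : ℝ → ℝ} {x h' r : ℝ}
    (hh : HasDerivWithinAt h h' (Ioi x) x) (hgh : ∀ z, g z ≤ h z) (hx : g x = h x)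
    (hr : h' < r) : ∃ᶠ z in 𝓝[>] x, slope g x z < r := by
  have hlim := (hasDerivWithinAt_iff_tendsto_slope' (lt_irrefl x)).mp hh
  refine Eventually.frequently ?_
  filter_upwards [hlim.eventually_lt_const hr, self_mem_nhdsWithin] with z hz (hxz : x < z)
  refine lt_of_le_of_lt ?_ hz
  rw [slope_def_field, slope_def_field]
  exact div_le_div_of_nonneg_right (by linarith [hgh z]) (by linarith)

section Hilbert

variable {E : Type*} [NormedAddCommGroup E] [InnerProductSpace ℝ E] {X : Set E} {φ : E → E}
  {K : ℝ≥0}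

/-- The tangency condition in inner-product form: `v` ranges over the outer normals of `X`
at `z`, i.e. the Riesz representatives of the support functionals. -/
def PointsInto (φ : E → E) (X : Set E) : Prop :=
  ∀ z ∈ X, ∀ v : E, (∀ x ∈ X, ⟪v, x⟫ ≤ ⟪v, z⟫) → ⟪v, φ z⟫ ≤ 0

theorem PointsInto.inner_sub_apply_le (htan : PointsInto φ X) (hφ : LipschitzWith K φ)
    {u p : E} (hp : p ∈ X) (hnormal : ∀ w ∈ X, ⟪u - p, w - p⟫ ≤ 0) :
    ⟪u - p, φ u⟫ ≤ K * ‖u - p‖ ^ 2 := by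
  have hφp : ⟪u - p, φ p⟫ ≤ 0 :=
    htan p hp (u - p) fun w hw ↦ by linarith [hnormal w hw, inner_sub_right (𝕜 := ℝ) (u - p) w p]
  have hdiff : ⟪u - p, φ u - φ p⟫ ≤ K * ‖u - p‖ ^ 2 :=
    calc ⟪u - p, φ u - φ p⟫ ≤ ‖u - p‖ * ‖φ u - φ p‖ := real_inner_le_norm _ _
      _ ≤ ‖u - p‖ * (K * ‖u - p‖) := by gcongr; exact hφ.norm_sub_le u p
      _ = K * ‖u - p‖ ^ 2 := by ring
  linarith [inner_sub_right (𝕜 := ℝ) (u - p) (φ u) (φ p)]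

variable [CompleteSpace E]

theorem IsClosed.exists_infDist_eq_norm_inner_le (hXc : IsClosed X) (hXconv : Convex ℝ X)
    (hne : X.Nonempty) (u : E) :
    ∃ p ∈ X, infDist u X = ‖u - p‖ ∧ ∀ w ∈ X, ⟪u - p, w - p⟫ ≤ 0 := by
  obtain ⟨p, hp, hmin⟩ := exists_norm_eq_iInf_of_complete_convex hne hXc.isComplete hXconv u
  refine ⟨p, hp, ?_, (norm_eq_iInf_iff_real_inner_le_zero hXconv hp).mp hmin⟩
  rw [hmin, infDist_eq_iInf]
  simp only [dist_eq_norm]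

theorem PointsInto.frequently_slope_infDist_sq_lt (htan : PointsInto φ X) (hXc : IsClosed X)
    (hXconv : Convex ℝ X) (hne : X.Nonempty) (hφ : LipschitzWith K φ)
    {f : ℝ → E} {x : ℝ} (hf : HasDerivWithinAt f (φ (f x)) (Ioi x) x) {r : ℝ}
    (hr : 2 * K * infDist (f x) X ^ 2 < r) :
    ∃ᶠ z in 𝓝[>] x, slope (fun t ↦ infDist (f t) X ^ 2) x z < r := by
  obtain ⟨p, hp, hdist, hnormal⟩ := hXc.exists_infDist_eq_norm_inner_le hXconv hne (f x)
  refine frequently_slope_lt_of_le_of_hasDerivWithinAt (hf.sub_const p).norm_sq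
    (fun z ↦ ?_) (by rw [hdist]) ?_
  · rw [← dist_eq_norm]
    exact pow_le_pow_left₀ infDist_nonneg (infDist_le_dist_of_mem hp) 2
  · have := htan.inner_sub_apply_le hφ hp hnormal
    rw [hdist] at hr
    linarith

theorem PointsInto.mem_of_hasDerivWithinAt (htan : PointsInto φ X) (hXc : IsClosed X)
    (hXconv : Convex ℝ X) (hφ : LipschitzWith K φ)
    {T : ℝ} {f : ℝ → E} (hf : ∀ t ∈ Icc 0 T, HasDerivWithinAt f (φ (f t)) (Icc 0 T) t)
    (hf0 : f 0 ∈ X) {t : ℝ} (ht : t ∈ Icc 0 T) : f t ∈ X := by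
  have hne : X.Nonempty := ⟨f 0, hf0⟩
  have hcont : ContinuousOn (fun t ↦ infDist (f t) X ^ 2) (Icc 0 T) :=
    ((continuous_infDist_pt X).comp_continuousOn fun t ht ↦ (hf t ht).continuousWithinAt).pow 2
  have hbound := le_gronwallBound_of_liminf_deriv_right_le (δ := 0) (K := 2 * K) (ε := 0) hcont
    (fun x hx r hr ↦ htan.frequently_slope_infDist_sq_lt hXc hXconv hne hφ
      ((hf x (Ico_subset_Icc_self hx)).mono_of_mem_nhdsWithin
        (mem_of_superset (Icc_mem_nhdsGT hx.2) (Icc_subset_Icc_left hx.1))) hr)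
    (by simp [infDist_zero_of_mem hf0]) (fun _ _ ↦ by rw [add_zero]) t ht
  rw [gronwallBound_ε0_δ0] at hbound
  rw [hXc.mem_iff_infDist_zero hne]
  exact pow_eq_zero_iff two_ne_zero |>.mp (le_antisymm hbound (by positivity))

end Hilbert

theorem stmt5 (k : ℕ) (X : Set (EuclideanSpace ℝ (Fin k))) (hXc : IsClosed X)
    (hXconv : Convex ℝ X) (φ : EuclideanSpace ℝ (Fin k) → EuclideanSpace ℝ (Fin k))
    (K : NNReal) (hφ : LipschitzWith K φ) :
    (∀ T : ℝ, 0 < T → ∀ f : ℝ → EuclideanSpace ℝ (Fin k),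
        (∀ t ∈ Set.Icc (0 : ℝ) T, HasDerivWithinAt f (φ (f t)) (Set.Icc (0 : ℝ) T) t) →
        f 0 ∈ X → ∀ t ∈ Set.Icc (0 : ℝ) T, f t ∈ X) ↔
    (∀ z ∈ X, ∀ l : EuclideanSpace ℝ (Fin k) →ₗ[ℝ] ℝ,
        (∀ x ∈ X, l x ≤ l z) → l (φ z) ≤ 0) := by
  constructor
  · intro hinv z hz l hl
    obtain ⟨T, hT, f, rfl, hf⟩ := hφ.exists_eq_forall_mem_Icc_hasDerivWithinAt z
    exact (hf 0 ⟨le_rfl, hT.le⟩).apply_nonpos_of_mapsTo hT (hinv T hT f hf hz)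
      (l := LinearMap.toContinuousLinearMap l) hl
  · intro htan T _ f hf hf0 t ht
    have hpoints : PointsInto φ X := fun z hz v hv ↦ htan z hz (innerₛₗ ℝ v) hv
    exact hpoints.mem_of_hasDerivWithinAt hXc hXconv hφ hf hf0 ht
end
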